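/- Under the hypotheses of the perturbed-system invariance theorem (|∂f/∂u| ≤ 1, |∂f/∂x| ≤ θ|g'| with θ < 1, |u(t)| ≤ κ), the g-scaled incremental mean volatility of x is bounded: limsup_{T→∞} (1/T) Σ_{t=1}^{T} |g(x(t+1)) − g(x(t))| ≤ 2κ/(1−θ). -/

import Mathlib

/-!
Write `D t = |g (x (t + 1)) - g (x t)|`. Splitting
`g (x (t + 2)) - g (x (t + 1)) = f (x (t + 1)) (u (t + 1)) - f (x t) (u t)` into a change of the
input and a change of the state, the mean value theorem bounds the first part by `2κ`, and the
comparison `|∂f/∂x| ≤ θ |g'|` with `g` monotone bounds the second by `θ D t`. So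
`D (t + 1) ≤ θ D t + 2κ`; summing over `t ≤ T` gives `(1 - θ) ∑_{t ≤ T} D t ≤ D 1 + 2κT`,
and dividing by `T` bounds the averages by `2κ/(1-θ) + O(1/T)`.
-/

open Filter Finset

lemma abs_sub_le_sub_of_abs_deriv_le_deriv {φ ψ : ℝ → ℝ} (hφ : Differentiable ℝ φ)
    (hψ : Differentiable ℝ ψ) (hbd : ∀ x, |deriv φ x| ≤ deriv ψ x) {a b : ℝ} (hab : a ≤ b) :
    |φ b - φ a| ≤ ψ b - ψ a := by
  have hsub : Monotone (fun s => ψ s - φ s) := by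
    refine monotone_of_deriv_nonneg (hψ.sub hφ) fun x => ?_
    rw [deriv_fun_sub (hψ x) (hφ x)]
    linarith [le_abs_self (deriv φ x), hbd x]
  have hadd : Monotone (fun s => ψ s + φ s) := by
    refine monotone_of_deriv_nonneg (hψ.add hφ) fun x => ?_
    rw [deriv_fun_add (hψ x) (hφ x)]
    linarith [neg_abs_le (deriv φ x), hbd x]
  have h₁ := hsub hab
  have h₂ := hadd hab
  simp only at h₁ h₂
  rw [abs_sub_le_iff]
  constructor <;> linarith

lemma abs_sub_le_mul_abs_sub_of_abs_deriv_le {g h : ℝ → ℝ} {θ : ℝ} (hg : Differentiable ℝ g)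
    (hgm : Monotone g ∨ Antitone g) (hh : Differentiable ℝ h)
    (hbd : ∀ x, |deriv h x| ≤ θ * |deriv g x|) (a b : ℝ) :
    |h b - h a| ≤ θ * |g b - g a| := by
  wlog hab : a ≤ b generalizing a b
  · rw [abs_sub_comm, abs_sub_comm (g b)]
    exact this b a (le_of_not_ge hab)
  rcases hgm with hgm | hgm
  · have hψ := abs_sub_le_sub_of_abs_deriv_le_deriv hh (hg.const_mul θ) (ψ := fun s => θ * g s)
      (fun x => by simpa only [deriv_const_mul_field', abs_of_nonneg hgm.deriv_nonneg] using hbd x)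
      hab
    rwa [abs_of_nonneg (sub_nonneg.2 (hgm hab)), mul_sub]
  · have hψ := abs_sub_le_sub_of_abs_deriv_le_deriv hh (hg.const_mul (-θ))
      (ψ := fun s => -θ * g s)
      (fun x => by
        rw [deriv_const_mul_field']
        simpa only [abs_of_nonpos hgm.deriv_nonpos, mul_neg, neg_mul] using hbd x)
      hab
    rw [abs_sub_comm (g b), abs_of_nonneg (sub_nonneg.2 (hgm hab))]
    linarith

lemma abs_sub_le_two_mul_of_abs_deriv_le_one {k : ℝ → ℝ} {κ p q : ℝ} (hk : Differentiable ℝ k)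
    (hbd : ∀ v, |v| ≤ κ → |deriv k v| ≤ 1) (hp : |p| ≤ κ) (hq : |q| ≤ κ) :
    |k p - k q| ≤ 2 * κ := by
  have hmem : ∀ {v : ℝ}, |v| ≤ κ → v ∈ Set.Icc (-κ) κ := fun hv => abs_le.1 hv
  have hlip := (convex_Icc (-κ) κ).norm_image_sub_le_of_norm_deriv_le (fun v _ => hk v)
    (fun v hv => hbd v (abs_le.2 hv)) (hmem hq) (hmem hp)
  simp only [Real.norm_eq_abs, one_mul] at hlip
  linarith [abs_sub p q]

lemma sub_mul_sum_Icc_add_le_of_le_mul_add {D : ℕ → ℝ} {θ c : ℝ}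
    (hrec : ∀ t, D (t + 1) ≤ θ * D t + c) (T : ℕ) :
    (1 - θ) * ∑ t ∈ Icc 1 T, D t + D (T + 1) ≤ D 1 + c * T := by
  induction T with
  | zero => simp
  | succ T ih =>
    rw [sum_Icc_succ_top (by omega)]
    push_cast
    linarith [hrec (T + 1)]

lemma limsup_avg_le_of_le_mul_add {D : ℕ → ℝ} {θ c : ℝ} (hθ : θ < 1) (hD : ∀ t, 0 ≤ D t)
    (hrec : ∀ t, D (t + 1) ≤ θ * D t + c) :
    limsup (fun T : ℕ => (1 / (T : ℝ)) * ∑ t ∈ Icc 1 T, D t) atTop ≤ c / (1 - θ) := by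
  have hθ' : 0 < 1 - θ := by linarith
  have hbound : ∀ᶠ T : ℕ in atTop,
      (1 / (T : ℝ)) * ∑ t ∈ Icc 1 T, D t ≤ c / (1 - θ) + D 1 / (1 - θ) * (1 / (T : ℝ)) := by
    filter_upwards [eventually_gt_atTop 0] with T hT
    have hT' : (0 : ℝ) < T := by exact_mod_cast hT
    have hsum : ∑ t ∈ Icc 1 T, D t ≤ (D 1 + c * T) / (1 - θ) := by
      rw [le_div_iff₀ hθ', mul_comm]
      linarith [sub_mul_sum_Icc_add_le_of_le_mul_add hrec T, hD (T + 1)]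
    calc (1 / (T : ℝ)) * ∑ t ∈ Icc 1 T, D t ≤ (1 / (T : ℝ)) * ((D 1 + c * T) / (1 - θ)) := by
          gcongr
      _ = c / (1 - θ) + D 1 / (1 - θ) * (1 / (T : ℝ)) := by
          field_simp
          ring
  have hlim : Tendsto (fun T : ℕ => c / (1 - θ) + D 1 / (1 - θ) * (1 / (T : ℝ))) atTop
      (nhds (c / (1 - θ))) := by
    simpa using
      (tendsto_one_div_atTop_nhds_zero_nat.const_mul (D 1 / (1 - θ))).const_add (c / (1 - θ))
  have hnonneg : ∀ T : ℕ, 0 ≤ (1 / (T : ℝ)) * ∑ t ∈ Icc 1 T, D t := fun T =>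
    mul_nonneg (by positivity) (sum_nonneg fun t _ => hD t)
  calc _ ≤ limsup (fun T : ℕ => c / (1 - θ) + D 1 / (1 - θ) * (1 / (T : ℝ))) atTop :=
        limsup_le_limsup hbound (isCoboundedUnder_le_of_le atTop hnonneg) hlim.isBoundedUnder_le
    _ = c / (1 - θ) := hlim.limsup_eq

theorem stmt_11_general (g : ℝ → ℝ) (f : ℝ → ℝ → ℝ) (θ κ : ℝ)
    (hg : ContDiff ℝ 1 g) (hgmono : Monotone g ∨ Antitone g)
    (hf : ContDiff ℝ 1 (fun p : ℝ × ℝ => f p.1 p.2))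
    (hθ1 : θ < 1)
    (hdu : ∀ x u : ℝ, |u| ≤ κ → |deriv (fun u' => f x u') u| ≤ 1)
    (hdx : ∀ x u : ℝ, |u| ≤ κ → |deriv (fun x' => f x' u) x| ≤ θ * |deriv g x|)
    (x u : ℕ → ℝ) (hu : ∀ t, |u t| ≤ κ)
    (htraj : ∀ t, g (x (t + 1)) = f (x t) (u t)) :
    Filter.limsup
        (fun T : ℕ => (1 / (T : ℝ)) * ∑ t ∈ Finset.Icc 1 T, |g (x (t + 1)) - g (x t)|)
        atTop
      ≤ 2 * κ / (1 - θ) := by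
  have hF : Differentiable ℝ (fun p : ℝ × ℝ => f p.1 p.2) := hf.differentiable one_ne_zero
  have hfx : ∀ v, Differentiable ℝ (fun x' => f x' v) := fun v =>
    hF.comp (differentiable_id.prodMk (differentiable_const v))
  have hfu : ∀ w, Differentiable ℝ (fun u' => f w u') := fun w =>
    hF.comp ((differentiable_const w).prodMk differentiable_id)
  refine limsup_avg_le_of_le_mul_add hθ1 (fun t => abs_nonneg _) fun t => ?_
  have hinput := abs_sub_le_two_mul_of_abs_deriv_le_one (hfu (x (t + 1))) (hdu (x (t + 1)))
    (hu (t + 1)) (hu t)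
  have hstate := abs_sub_le_mul_abs_sub_of_abs_deriv_le (hg.differentiable one_ne_zero) hgmono
    (hfx (u t)) (fun z => hdx z (u t) (hu t)) (x t) (x (t + 1))
  calc |g (x (t + 1 + 1)) - g (x (t + 1))|
      = |(f (x (t + 1)) (u (t + 1)) - f (x (t + 1)) (u t))
          + (f (x (t + 1)) (u t) - f (x t) (u t))| := by
        rw [htraj (t + 1), htraj t, sub_add_sub_cancel]
    _ ≤ 2 * κ + θ * |g (x (t + 1)) - g (x t)| := (abs_add_le _ _).trans (add_le_add hinput hstate)
    _ = θ * |g (x (t + 1)) - g (x t)| + 2 * κ := add_comm _ _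

/-- under the perturbed-system hypotheses (`|∂f/∂u| ≤ 1`,
`|∂f/∂x| ≤ θ|g'|`, `θ < 1`, `|u(t)| ≤ κ`), the `g`-scaled incremental mean
volatility of `x` is at most `2κ/(1−θ)`. -/
theorem stmt_11 (g : ℝ → ℝ) (f : ℝ → ℝ → ℝ) (θ κ : ℝ)
    (hg : ContDiff ℝ 1 g) (hgmono : Monotone g ∨ Antitone g)
    (hf : ContDiff ℝ 1 (fun p : ℝ × ℝ => f p.1 p.2))
    (hκ : 0 < κ) (hθ0 : 0 ≤ θ) (hθ1 : θ < 1)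
    (hdu : ∀ x u : ℝ, |u| ≤ κ → |deriv (fun u' => f x u') u| ≤ 1)
    (hdx : ∀ x u : ℝ, |u| ≤ κ → |deriv (fun x' => f x' u) x| ≤ θ * |deriv g x|)
    (x u : ℕ → ℝ) (hu : ∀ t, |u t| ≤ κ)
    (htraj : ∀ t, g (x (t + 1)) = f (x t) (u t)) :
    Filter.limsup
        (fun T : ℕ => (1 / (T : ℝ)) * ∑ t ∈ Finset.Icc 1 T, |g (x (t + 1)) - g (x t)|)
        atTop
      ≤ 2 * κ / (1 - θ) :=
  stmt_11_general g f θ κ hg hgmono hf hθ1 hdu hdx x u hu htraj
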